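/- Let A be an associative algebra, {{-,-}} a double Poisson bracket on A, I ⊂ A a two-sided ideal such that for every x ∈ I and a ∈ A, the single bracket {x,a} = m({{x,a}}) lies in I + [A,A]. Then the formula {ā + I, b̄ + I} := class of {a,b} gives a well-defined Lie bracket on (A/I)/[A/I, A/I], i.e. the single bracket descends to an H_0-Poisson (Lie) structure on the commutator quotient of A/I. -/

import Mathlib

/-!
STATEMENT 16: Let {{-,-}} be a double Poisson bracket on A and I a two-sided ideal
with {I,A} ⊆ I + [A,A] for the single bracket.  Then the single bracket descends to
a well-defined Lie bracket on (A/I)/[A/I, A/I] ≅ A/(I + [A,A]) (an H₀-Poisson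
structure on the commutator quotient of A/I).
-/

namespace Stmt16

open TensorProduct

variable {R A : Type*} [CommRing R] [Ring A] [Algebra R A]

/-- The cyclic permutation τ_(123) on A⊗A⊗A : x⊗y⊗z ↦ z⊗x⊗y. -/
noncomputable def cyc3 (R A : Type*) [CommRing R] [Ring A] [Algebra R A] :
    (A ⊗[R] A) ⊗[R] A →ₗ[R] (A ⊗[R] A) ⊗[R] A :=
  ((TensorProduct.assoc R A A A).symm.toLinearMap).comp
    (TensorProduct.comm R (A ⊗[R] A) A).toLinearMap

/-- The triple bracket associated to a binary operation `D`:
{{a,b,c}} = {{a,{{b,c}}}}_L + τ_(123){{b,{{c,a}}}}_L + τ_(132){{c,{{a,b}}}}_L,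
where {{a,u⊗v}}_L = {{a,u}}⊗v. -/
noncomputable def tripleBr (D : A →ₗ[R] A →ₗ[R] A ⊗[R] A) (a b c : A) :
    (A ⊗[R] A) ⊗[R] A :=
  LinearMap.rTensor A (D a) (D b c)
    + cyc3 R A (LinearMap.rTensor A (D b) (D c a))
    + cyc3 R A (cyc3 R A (LinearMap.rTensor A (D c) (D a b)))

/-- The single bracket {a,b} = m({{a,b}}) associated to `D`. -/
noncomputable def sb (D : A →ₗ[R] A →ₗ[R] A ⊗[R] A) (a b : A) : A :=
  LinearMap.mul' R A (D a b)

/-- The span of commutators. -/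
def commSpan (R A : Type*) [CommRing R] [Ring A] [Algebra R A] : Submodule R A :=
  Submodule.span R {x : A | ∃ u v : A, x = u * v - v * u}

/-! The single bracket is a derivation in its second argument, hence maps `A × [A,A]` into
`[A,A]`, and it is antisymmetric modulo `[A,A]`. Together with `{I, A} ⊆ I + [A,A]` this gives
`{I + [A,A], A} + {A, I + [A,A]} ⊆ I + [A,A]`, so the bracket descends to `A/(I + [A,A])`, where
antisymmetry becomes alternation because `2` is invertible. The Jacobi identity already holds
in `A` (Van den Bergh): applying `x ⊗ y ⊗ z ↦ xyz` to the vanishing triple brackets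
`{{a,b,c}}` and `τ_(123){{a,c,b}}` and subtracting yields exactly `{a,{b,c}} - {{a,b},c} - {b,{a,c}}`. -/

noncomputable def mul3 (R A : Type*) [CommRing R] [Ring A] [Algebra R A] :
    (A ⊗[R] A) ⊗[R] A →ₗ[R] A :=
  LinearMap.mul' R A ∘ₗ (LinearMap.mul' R A).rTensor A

noncomputable def mulRev (R A : Type*) [CommRing R] [Ring A] [Algebra R A] :
    A ⊗[R] A →ₗ[R] A :=
  LinearMap.mul' R A ∘ₗ (TensorProduct.comm R A A).toLinearMap

@[simp] lemma cyc3_tmul (x y z : A) :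
    cyc3 R A ((x ⊗ₜ[R] y) ⊗ₜ[R] z) = (z ⊗ₜ[R] x) ⊗ₜ[R] y := by
  simp [cyc3]

@[simp] lemma mul3_tmul (x y z : A) : mul3 R A ((x ⊗ₜ[R] y) ⊗ₜ[R] z) = x * y * z := by
  simp [mul3]

@[simp] lemma mulRev_tmul (x y : A) : mulRev R A (x ⊗ₜ[R] y) = y * x := by
  simp [mulRev]

lemma cyc3_cyc3_cyc3 (z : (A ⊗[R] A) ⊗[R] A) : cyc3 R A (cyc3 R A (cyc3 R A z)) = z := by
  induction z using TensorProduct.induction_on with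
  | zero => simp
  | add x y hx hy => simp only [map_add, hx, hy]
  | tmul w v =>
    induction w using TensorProduct.induction_on with
    | zero => simp
    | tmul x y => simp
    | add x y hx hy => simp only [add_tmul, map_add, hx, hy]

lemma mul'_mul_one_tmul (t : A ⊗[R] A) (v : A) :
    LinearMap.mul' R A (t * (1 ⊗ₜ[R] v)) = LinearMap.mul' R A t * v := by
  induction t using TensorProduct.induction_on with
  | zero => simp
  | tmul x y => simp [mul_assoc]
  | add x y hx hy => simp only [add_mul, map_add, hx, hy]

lemma mul'_tmul_one_mul (u : A) (t : A ⊗[R] A) :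
    LinearMap.mul' R A ((u ⊗ₜ[R] 1) * t) = u * LinearMap.mul' R A t := by
  induction t using TensorProduct.induction_on with
  | zero => simp
  | tmul x y => simp [mul_assoc]
  | add x y hx hy => simp only [mul_add, map_add, hx, hy]

lemma mulRev_tmul_one_mul (u : A) (t : A ⊗[R] A) :
    mulRev R A ((u ⊗ₜ[R] 1) * t) = mulRev R A (t * (1 ⊗ₜ[R] u)) := by
  induction t using TensorProduct.induction_on with
  | zero => simp
  | tmul x y => simp [mul_assoc]
  | add x y hx hy => simp only [mul_add, add_mul, map_add, hx, hy]

lemma mul3_cyc3_tmul (w : A ⊗[R] A) (v : A) :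
    mul3 R A (cyc3 R A (w ⊗ₜ[R] v)) = v * LinearMap.mul' R A w := by
  induction w using TensorProduct.induction_on with
  | zero => simp
  | tmul x y => simp [mul_assoc]
  | add x y hx hy => simp only [add_tmul, map_add, hx, hy, mul_add]

lemma mul3_cyc3_cyc3_tmul (w : A ⊗[R] A) (v : A) :
    mul3 R A (cyc3 R A (cyc3 R A (w ⊗ₜ[R] v))) = mulRev R A (w * (1 ⊗ₜ[R] v)) := by
  induction w using TensorProduct.induction_on with
  | zero => simp
  | tmul x y => simp [mul_assoc]
  | add x y hx hy => simp only [add_tmul, add_mul, map_add, hx, hy]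

lemma mul3_rTensor (f : A →ₗ[R] A ⊗[R] A) (t : A ⊗[R] A) :
    mul3 R A (f.rTensor A t) = LinearMap.mul' R A ((LinearMap.mul' R A ∘ₗ f).rTensor A t) := by
  induction t using TensorProduct.induction_on with
  | zero => simp
  | tmul u v => simp [mul3]
  | add x y hx hy => simp only [map_add, hx, hy]

lemma mul3_cyc3_rTensor (f : A →ₗ[R] A ⊗[R] A) (t : A ⊗[R] A) :
    mul3 R A (cyc3 R A (f.rTensor A t)) = mulRev R A ((LinearMap.mul' R A ∘ₗ f).rTensor A t) := by
  induction t using TensorProduct.induction_on with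
  | zero => simp
  | tmul u v => simp [mul3_cyc3_tmul]
  | add x y hx hy => simp only [map_add, hx, hy]

lemma mul'_lTensor (g : A →ₗ[R] A) (t : A ⊗[R] A) :
    LinearMap.mul' R A (g.lTensor A t) = mulRev R A (g.rTensor A (TensorProduct.comm R A A t)) := by
  induction t using TensorProduct.induction_on with
  | zero => simp
  | tmul u v => simp
  | add x y hx hy => simp only [map_add, hx, hy]

section SingleBracket

variable (D : A →ₗ[R] A →ₗ[R] A ⊗[R] A)

lemma sb_add_right (a x y : A) : sb D a (x + y) = sb D a x + sb D a y :=
  map_add (D.compr₂ (LinearMap.mul' R A) a) x y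

lemma sb_sub_right (a x y : A) : sb D a (x - y) = sb D a x - sb D a y :=
  map_sub (D.compr₂ (LinearMap.mul' R A) a) x y

lemma sb_mul_right
    (hder : ∀ a b c : A, D a (b * c) = D a b * (1 ⊗ₜ[R] c) + (b ⊗ₜ[R] 1) * D a c)
    (a b c : A) : sb D a (b * c) = sb D a b * c + b * sb D a c := by
  simp only [sb, hder a b c, map_add, mul'_mul_one_tmul, mul'_tmul_one_mul]

lemma sb_mul'_right
    (hder : ∀ a b c : A, D a (b * c) = D a b * (1 ⊗ₜ[R] c) + (b ⊗ₜ[R] 1) * D a c)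
    (x : A) (t : A ⊗[R] A) :
    sb D x (LinearMap.mul' R A t)
      = LinearMap.mul' R A ((LinearMap.mul' R A ∘ₗ D x).rTensor A t)
        + LinearMap.mul' R A ((LinearMap.mul' R A ∘ₗ D x).lTensor A t) := by
  induction t using TensorProduct.induction_on with
  | zero => simp [sb]
  | tmul u v => simpa [sb] using sb_mul_right D hder x u v
  | add p q hp hq =>
    simp only [sb, map_add] at hp hq ⊢
    rw [hp, hq]
    abel

lemma mulRev_mul'_right
    (hder : ∀ a b c : A, D a (b * c) = D a b * (1 ⊗ₜ[R] c) + (b ⊗ₜ[R] 1) * D a c)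
    (x : A) (t : A ⊗[R] A) :
    mulRev R A (D x (LinearMap.mul' R A t))
      = mul3 R A (cyc3 R A (cyc3 R A ((D x).rTensor A t)))
        + mul3 R A (cyc3 R A (cyc3 R A ((D x).rTensor A (TensorProduct.comm R A A t)))) := by
  induction t using TensorProduct.induction_on with
  | zero => simp
  | tmul u v =>
    rw [LinearMap.rTensor_tmul, TensorProduct.comm_tmul, LinearMap.rTensor_tmul,
      mul3_cyc3_cyc3_tmul, mul3_cyc3_cyc3_tmul, LinearMap.mul'_apply, hder x u v, map_add,
      mulRev_tmul_one_mul]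
  | add p q hp hq =>
    simp only [map_add] at hp hq ⊢
    rw [hp, hq]
    abel

lemma comm_apply_eq_neg
    (hanti : ∀ a b : A, D a b = - (TensorProduct.comm R A A) (D b a)) (a b : A) :
    TensorProduct.comm R A A (D a b) = - D b a := by
  rw [hanti a b, map_neg, TensorProduct.comm_comm]

lemma sb_eq_neg_mulRev
    (hanti : ∀ a b : A, D a b = - (TensorProduct.comm R A A) (D b a)) (a b : A) :
    sb D a b = - mulRev R A (D b a) := by
  rw [sb, hanti a b, map_neg]
  rfl

theorem sb_jacobi
    (hder : ∀ a b c : A, D a (b * c) = D a b * (1 ⊗ₜ[R] c) + (b ⊗ₜ[R] 1) * D a c)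
    (hanti : ∀ a b : A, D a b = - (TensorProduct.comm R A A) (D b a))
    (htriple : ∀ a b c : A, tripleBr D a b c = 0) (a b c : A) :
    sb D a (sb D b c) = sb D (sb D a b) c + sb D b (sb D a c) := by
  set m := LinearMap.mul' R A
  set T : A ⊗[R] A → A := fun t => mul3 R A (cyc3 R A (cyc3 R A ((D c).rTensor A t)))
  have habc : m ((m ∘ₗ D a).rTensor A (D b c)) + mulRev R A ((m ∘ₗ D b).rTensor A (D c a))
      + T (D a b) = 0 := by
    simpa only [tripleBr, map_add, map_zero, mul3_rTensor, mul3_cyc3_rTensor]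
      using congrArg (mul3 R A) (htriple a b c)
  have hacb : mulRev R A ((m ∘ₗ D a).rTensor A (D c b)) + T (D b a)
      + m ((m ∘ₗ D b).rTensor A (D a c)) = 0 := by
    simpa only [tripleBr, map_add, map_zero, cyc3_cyc3_cyc3, mul3_rTensor, mul3_cyc3_rTensor]
      using congrArg (fun z => mul3 R A (cyc3 R A z)) (htriple a c b)
  have hsb_sb : ∀ x y z : A, sb D x (sb D y z)
      = m ((m ∘ₗ D x).rTensor A (D y z)) - mulRev R A ((m ∘ₗ D x).rTensor A (D z y)) := by
    intro x y z
    change sb D x (m (D y z)) = _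
    rw [sb_mul'_right D hder, mul'_lTensor, comm_apply_eq_neg D hanti, map_neg, map_neg,
      sub_eq_add_neg]
  have hsb_left : sb D (sb D a b) c = T (D b a) - T (D a b) := by
    rw [sb_eq_neg_mulRev D hanti, sb, mulRev_mul'_right D hder, comm_apply_eq_neg D hanti]
    simp only [T, map_neg]
    abel
  rw [hsb_sb, hsb_sb, hsb_left, ← sub_eq_zero, ← sub_eq_zero.mpr (habc.trans hacb.symm)]
  abel

end SingleBracket

section CommutatorQuotient

variable (D : A →ₗ[R] A →ₗ[R] A ⊗[R] A)

lemma commutator_mem_commSpan (u v : A) : u * v - v * u ∈ commSpan R A :=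
  Submodule.subset_span ⟨u, v, rfl⟩

lemma mul'_sub_mulRev_mem_commSpan (t : A ⊗[R] A) :
    LinearMap.mul' R A t - mulRev R A t ∈ commSpan R A := by
  induction t using TensorProduct.induction_on with
  | zero => simp
  | tmul u v => simpa using commutator_mem_commSpan u v
  | add x y hx hy => simpa only [map_add, add_sub_add_comm] using add_mem hx hy

lemma sb_add_sb_swap_mem_commSpan
    (hanti : ∀ a b : A, D a b = - (TensorProduct.comm R A A) (D b a)) (a b : A) :
    sb D a b + sb D b a ∈ commSpan R A := by
  rw [sb_eq_neg_mulRev D hanti, neg_add_eq_sub]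
  exact mul'_sub_mulRev_mem_commSpan _

lemma sb_self_mem_commSpan [Invertible (2 : R)]
    (hanti : ∀ a b : A, D a b = - (TensorProduct.comm R A A) (D b a)) (a : A) :
    sb D a a ∈ commSpan R A := by
  have h : (2 : R) • sb D a a ∈ commSpan R A := by
    rw [two_smul]
    exact sb_add_sb_swap_mem_commSpan D hanti a a
  simpa [smul_smul] using Submodule.smul_mem _ (⅟2 : R) h

lemma sb_swap_mem
    (hanti : ∀ a b : A, D a b = - (TensorProduct.comm R A A) (D b a))
    {P : Submodule R A} (hP : commSpan R A ≤ P) {a b : A} (h : sb D a b ∈ P) :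
    sb D b a ∈ P := by
  have hsum := hP (sb_add_sb_swap_mem_commSpan D hanti a b)
  simpa using sub_mem hsum h

lemma sb_mem_commSpan_of_mem
    (hder : ∀ a b c : A, D a (b * c) = D a b * (1 ⊗ₜ[R] c) + (b ⊗ₜ[R] 1) * D a c)
    (a : A) {z : A} (hz : z ∈ commSpan R A) : sb D a z ∈ commSpan R A := by
  induction hz using Submodule.span_induction with
  | mem x hx =>
    obtain ⟨u, v, rfl⟩ := hx
    have h : sb D a (u * v - v * u)
        = (sb D a u * v - v * sb D a u) + (u * sb D a v - sb D a v * u) := by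
      rw [sb_sub_right, sb_mul_right D hder, sb_mul_right D hder]
      abel
    rw [h]
    exact add_mem (commutator_mem_commSpan _ _) (commutator_mem_commSpan _ _)
  | zero => simp [sb]
  | add x y _ _ hx hy => rw [sb_add_right]; exact add_mem hx hy
  | smul c x _ hx => simpa [sb] using Submodule.smul_mem _ c hx

variable (hder : ∀ a b c : A, D a (b * c) = D a b * (1 ⊗ₜ[R] c) + (b ⊗ₜ[R] 1) * D a c)
  (hanti : ∀ a b : A, D a b = - (TensorProduct.comm R A A) (D b a))
  {J : Submodule R A} (hJ : ∀ x ∈ J, ∀ a : A, sb D x a ∈ J ⊔ commSpan R A)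
include hder hanti hJ

lemma sb_mem_sup_commSpan_right (a : A) {t : A} (ht : t ∈ J ⊔ commSpan R A) :
    sb D a t ∈ J ⊔ commSpan R A := by
  obtain ⟨y, hy, z, hz, rfl⟩ := Submodule.mem_sup.mp ht
  rw [sb_add_right]
  exact add_mem (sb_swap_mem D hanti le_sup_right (hJ y hy a))
    (Submodule.mem_sup_right (sb_mem_commSpan_of_mem D hder a hz))

lemma sb_mem_sup_commSpan_left (b : A) {t : A} (ht : t ∈ J ⊔ commSpan R A) :
    sb D t b ∈ J ⊔ commSpan R A :=
  sb_swap_mem D hanti le_sup_right (sb_mem_sup_commSpan_right D hder hanti hJ b ht)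

end CommutatorQuotient

theorem H0Poisson_descends_general {k A : Type*} [Field k] [CharZero k]
    [Ring A] [Algebra k A]
    (D : A →ₗ[k] A →ₗ[k] A ⊗[k] A)
    -- double Poisson bracket
    (hder : ∀ a b c : A, D a (b * c) = D a b * (1 ⊗ₜ[k] c) + (b ⊗ₜ[k] 1) * D a c)
    (hanti : ∀ a b : A, D a b = - (TensorProduct.comm k A A) (D b a))
    (htriple : ∀ a b c : A, tripleBr D a b c = 0)
    -- a two-sided ideal I
    (I : Ideal A)
    -- {I, A} ⊆ I + [A,A]
    (hIA : ∀ x ∈ I, ∀ a : A,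
        sb D x a ∈ (Submodule.restrictScalars k I) ⊔ commSpan k A) :
    -- the single bracket descends to a Lie bracket on A/(I + [A,A]) ≅ (A/I)/[A/I,A/I]
    ∃ brL : (A ⧸ ((Submodule.restrictScalars k I) ⊔ commSpan k A)) →ₗ[k]
        (A ⧸ ((Submodule.restrictScalars k I) ⊔ commSpan k A)) →ₗ[k]
        (A ⧸ ((Submodule.restrictScalars k I) ⊔ commSpan k A)),
      -- well-definedness: it is induced by the single bracket on representatives
      (∀ a b : A,
        brL (Submodule.Quotient.mk a) (Submodule.Quotient.mk b)
          = Submodule.Quotient.mk (sb D a b)) ∧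
      -- it is a Lie bracket: alternating ...
      (∀ x, brL x x = 0) ∧
      -- ... and satisfying the Jacobi identity (in Leibniz form)
      (∀ x y z, brL x (brL y z) = brL (brL x y) z + brL y (brL x z)) := by
  set M := Submodule.restrictScalars k I ⊔ commSpan k A
  let f : A →ₗ[k] A →ₗ[k] A ⧸ M := (D.compr₂ (LinearMap.mul' k A)).compr₂ M.mkQ
  have hleft : M ≤ LinearMap.ker f := fun t ht => LinearMap.ext fun b =>
    (Submodule.Quotient.mk_eq_zero M).2 (sb_mem_sup_commSpan_left D hder hanti hIA b ht)
  have hright : M ≤ LinearMap.ker f.flip := fun t ht => LinearMap.ext fun a =>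
    (Submodule.Quotient.mk_eq_zero M).2 (sb_mem_sup_commSpan_right D hder hanti hIA a ht)
  let _ : Invertible (2 : k) := invertibleOfNonzero two_ne_zero
  refine ⟨f.liftQ₂ M M hleft hright, fun a b => rfl, ?_, ?_⟩
  · rintro ⟨a⟩
    exact (Submodule.Quotient.mk_eq_zero M).2 (Submodule.mem_sup_right (sb_self_mem_commSpan D hanti a))
  · rintro ⟨a⟩ ⟨b⟩ ⟨c⟩
    exact congrArg (Submodule.Quotient.mk (p := M)) (sb_jacobi D hder hanti htriple a b c)

theorem H0Poisson_descends {k A : Type*} [Field k] [CharZero k]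
    [Ring A] [Algebra k A]
    (D : A →ₗ[k] A →ₗ[k] A ⊗[k] A)
    -- double Poisson bracket
    (hder : ∀ a b c : A, D a (b * c) = D a b * (1 ⊗ₜ[k] c) + (b ⊗ₜ[k] 1) * D a c)
    (hanti : ∀ a b : A, D a b = - (TensorProduct.comm k A A) (D b a))
    (htriple : ∀ a b c : A, tripleBr D a b c = 0)
    -- a two-sided ideal I
    (I : Ideal A) (hright : ∀ x ∈ I, ∀ a : A, x * a ∈ I)
    -- {I, A} ⊆ I + [A,A]
    (hIA : ∀ x ∈ I, ∀ a : A,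
        sb D x a ∈ (Submodule.restrictScalars k I) ⊔ commSpan k A) :
    -- the single bracket descends to a Lie bracket on A/(I + [A,A]) ≅ (A/I)/[A/I,A/I]
    ∃ brL : (A ⧸ ((Submodule.restrictScalars k I) ⊔ commSpan k A)) →ₗ[k]
        (A ⧸ ((Submodule.restrictScalars k I) ⊔ commSpan k A)) →ₗ[k]
        (A ⧸ ((Submodule.restrictScalars k I) ⊔ commSpan k A)),
      -- well-definedness: it is induced by the single bracket on representatives
      (∀ a b : A,
        brL (Submodule.Quotient.mk a) (Submodule.Quotient.mk b)
          = Submodule.Quotient.mk (sb D a b)) ∧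
      -- it is a Lie bracket: alternating ...
      (∀ x, brL x x = 0) ∧
      -- ... and satisfying the Jacobi identity (in Leibniz form)
      (∀ x y z, brL x (brL y z) = brL (brL x y) z + brL y (brL x z)) :=
  H0Poisson_descends_general D hder hanti htriple I hIA

end Stmt16
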